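/- If a tree with edge-weight probability distributions at each node has no infinite directed paths (i.e., is well-founded), then the sum over all leaves of their weights equals exactly 1. -/

import Mathlib

noncomputable def nodeWeight {A : Type*} (w : List A → A → ℝ) (v : List A) : ℝ :=
  ∏ i : Fin v.length, w (v.take i.1) (v.get i)

def IsLeaf {A : Type*} (T : Set (List A)) (v : List A) : Prop :=
  v ∈ T ∧ ∀ a : A, v ++ [a] ∉ T

def prefixList {A : Type*} (b : ℕ → A) (n : ℕ) : List A := (List.range n).map b

/-!
Let `leafMass v` be the total weight of the leaves below `v`. Sorting those leaves by the child
of `v` they pass through gives `leafMass v = nodeWeight v * ∑ₐ w v a` at an inner node, and the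
edge weights there sum to `1`; so `leafMass v = nodeWeight v` by induction along the child
relation. That induction is available from the root because an infinite chain of children is an
infinite branch. Sums are taken in `ℝ≥0∞`, where they always exist and may be exchanged.
-/

open scoped ENNReal
open Classical

section

variable {A : Type*}

lemma prefixList_succ (b : ℕ → A) (n : ℕ) :
    prefixList b (n + 1) = prefixList b n ++ [b n] := by
  simp [prefixList, List.range_succ]

lemma ite_prefix_eq_add_tsum {M : Type*} [AddCommMonoid M] [TopologicalSpace M]
    (v u : List A) (x : M) :
    (if v <+: u then x else 0) =
      (if u = v then x else 0) + ∑' a, if v ++ [a] <+: u then x else 0 := by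
  by_cases huv : u = v
  · subst huv
    have hnot : ∀ a, ¬ u ++ [a] <+: u := fun a h => by simpa using h.length_le
    simp [hnot]
  rw [if_neg huv, zero_add]
  by_cases hvu : v <+: u
  · obtain ⟨_ | ⟨a, t⟩, rfl⟩ := hvu
    · simp at huv
    rw [if_pos (List.prefix_append v _), tsum_eq_single a, if_pos (by simp)]
    intro b hb
    simp [hb]
  · have hnot : ∀ a, ¬ v ++ [a] <+: u := fun a h => hvu ((List.prefix_append v [a]).trans h)
    simp [hvu, hnot]

section nodeWeight

variable (w : List A → A → ℝ)

@[simp]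
lemma nodeWeight_nil : nodeWeight w [] = 1 := by
  simp [nodeWeight]

lemma nodeWeight_append_singleton (v : List A) (a : A) :
    nodeWeight w (v ++ [a]) = nodeWeight w v * w v a := by
  simp only [nodeWeight]
  rw [← Fin.prod_congr' _ (by simp : v.length + 1 = (v ++ [a]).length), Fin.prod_univ_castSucc]
  simp [List.take_append_of_le_length]

lemma nodeWeight_nonneg (hnonneg : ∀ v a, 0 ≤ w v a) (v : List A) : 0 ≤ nodeWeight w v :=
  Finset.prod_nonneg fun _ _ => hnonneg _ _

lemma nodeWeight_append_eq_zero {v : List A} (hv : nodeWeight w v = 0) (s : List A) :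
    nodeWeight w (v ++ s) = 0 := by
  induction s using List.reverseRecOn with
  | nil => simpa
  | append_singleton s a ih =>
    rw [← List.append_assoc, nodeWeight_append_singleton, ih, zero_mul]

end nodeWeight

section tree

variable (T : Set (List A)) (w : List A → A → ℝ)

def childRel (u v : List A) : Prop :=
  u ∈ T ∧ ∃ a, u = v ++ [a]

lemma acc_childRel_nil (hroot : [] ∈ T) (hwf : ¬ ∃ b : ℕ → A, ∀ n : ℕ, prefixList b n ∈ T) :
    Acc (childRel T) [] := by
  by_contra hnil
  obtain ⟨f, hf0, hf⟩ := not_acc_iff_exists_descending_chain.1 hnil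
  choose hfT b hb using hf
  have hprefix : ∀ n, prefixList b n = f n := by
    intro n
    induction n with
    | zero => exact hf0.symm
    | succ n ih => rw [prefixList_succ, ih, hb]
  refine hwf ⟨b, fun n => hprefix n ▸ ?_⟩
  cases n with
  | zero => exact hf0 ▸ hroot
  | succ n => exact hfT n

noncomputable def leafMass (v : List A) : ℝ≥0∞ :=
  ∑' u : {u // IsLeaf T u}, if v <+: u.1 then ENNReal.ofReal (nodeWeight w u.1) else 0

lemma leafMass_nil :
    leafMass T w [] = ∑' u : {u // IsLeaf T u}, ENNReal.ofReal (nodeWeight w u.1) := by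
  simp [leafMass]

lemma leafMass_eq_add_tsum (v : List A) :
    leafMass T w v = (if IsLeaf T v then ENNReal.ofReal (nodeWeight w v) else 0) +
      ∑' a, leafMass T w (v ++ [a]) := by
  have hself : (∑' u : {u // IsLeaf T u}, if u.1 = v then ENNReal.ofReal (nodeWeight w u.1) else 0)
      = if IsLeaf T v then ENNReal.ofReal (nodeWeight w v) else 0 := by
    split_ifs with hv
    · rw [tsum_eq_single ⟨v, hv⟩ fun u hu => if_neg fun h => hu (Subtype.ext h), if_pos rfl]
    · exact ENNReal.tsum_eq_zero.2 fun u => if_neg fun (h : u.1 = v) => hv (h ▸ u.2)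
  simp only [leafMass]
  rw [← hself, ENNReal.tsum_comm, ← ENNReal.tsum_add]
  exact tsum_congr fun u => ite_prefix_eq_add_tsum v u.1 _

lemma leafMass_eq_zero_of_nodeWeight_eq_zero {v : List A} (hv : nodeWeight w v = 0) :
    leafMass T w v = 0 := by
  refine ENNReal.tsum_eq_zero.2 fun u => ?_
  split_ifs with hvu
  · obtain ⟨s, hs⟩ := hvu
    rw [← hs, nodeWeight_append_eq_zero w hv, ENNReal.ofReal_zero]
  · rfl

variable {T w}

lemma tsum_ofReal_edgeWeight (hnonneg : ∀ (v : List A) (a : A), 0 ≤ w v a)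
    (hzero : ∀ (v : List A) (a : A), v ++ [a] ∉ T → w v a = 0)
    (hsum : ∀ v ∈ T, (∃ a : A, v ++ [a] ∈ T) → ∑' a : A, w v a = 1) {v : List A} (hv : v ∈ T) :
    ∑' a, ENNReal.ofReal (w v a) = if IsLeaf T v then 0 else 1 := by
  split_ifs with hleaf
  · simp [hzero v _ (hleaf.2 _)]
  · have hchild : ∃ a, v ++ [a] ∈ T := by
      by_contra h
      exact hleaf ⟨hv, fun a ha => h ⟨a, ha⟩⟩
    have hsum1 := hsum v hv hchild
    have hsummable : Summable (w v) := by
      by_contra h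
      rw [tsum_eq_zero_of_not_summable h] at hsum1
      exact zero_ne_one hsum1
    rw [← ENNReal.ofReal_tsum_of_nonneg (hnonneg v) hsummable, hsum1, ENNReal.ofReal_one]

lemma leafMass_eq_ofReal_nodeWeight (hnonneg : ∀ (v : List A) (a : A), 0 ≤ w v a)
    (hzero : ∀ (v : List A) (a : A), v ++ [a] ∉ T → w v a = 0)
    (hsum : ∀ v ∈ T, (∃ a : A, v ++ [a] ∈ T) → ∑' a : A, w v a = 1) {v : List A}
    (hacc : Acc (childRel T) v) (hv : v ∈ T) :
    leafMass T w v = ENNReal.ofReal (nodeWeight w v) := by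
  induction hacc with
  | intro v _ ih =>
  have hchild : ∀ a, leafMass T w (v ++ [a]) =
      ENNReal.ofReal (nodeWeight w v) * ENNReal.ofReal (w v a) := by
    intro a
    rw [← ENNReal.ofReal_mul (nodeWeight_nonneg w hnonneg v), ← nodeWeight_append_singleton]
    by_cases ha : v ++ [a] ∈ T
    · exact ih _ ⟨ha, a, rfl⟩ ha
    · have hw : nodeWeight w (v ++ [a]) = 0 := by
        rw [nodeWeight_append_singleton, hzero v a ha, mul_zero]
      rw [leafMass_eq_zero_of_nodeWeight_eq_zero T w hw, hw, ENNReal.ofReal_zero]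
  rw [leafMass_eq_add_tsum, tsum_congr hchild, ENNReal.tsum_mul_left,
    tsum_ofReal_edgeWeight hnonneg hzero hsum hv]
  split_ifs <;> simp

end tree

end

theorem sum_leaf_weights_eq_one_of_wellFounded_general {A : Type*}
    (T : Set (List A)) (w : List A → A → ℝ)
    (hroot : [] ∈ T)
    (hnonneg : ∀ (v : List A) (a : A), 0 ≤ w v a)
    (hzero : ∀ (v : List A) (a : A), v ++ [a] ∉ T → w v a = 0)
    (hsum : ∀ v ∈ T, (∃ a : A, v ++ [a] ∈ T) → ∑' a : A, w v a = 1)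
    (hwf : ¬ ∃ b : ℕ → A, ∀ n : ℕ, prefixList b n ∈ T) :
    ∑' v : {v : List A // IsLeaf T v}, nodeWeight w v.1 = 1 := by
  have hmass : ∑' v : {v : List A // IsLeaf T v}, ENNReal.ofReal (nodeWeight w v.1) = 1 := by
    rw [← leafMass_nil, leafMass_eq_ofReal_nodeWeight hnonneg hzero hsum
      (acc_childRel_nil T hroot hwf) hroot, nodeWeight_nil, ENNReal.ofReal_one]
  calc ∑' v : {v : List A // IsLeaf T v}, nodeWeight w v.1
      = ∑' v : {v : List A // IsLeaf T v}, (ENNReal.ofReal (nodeWeight w v.1)).toReal :=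
        tsum_congr fun v => (ENNReal.toReal_ofReal (nodeWeight_nonneg w hnonneg v.1)).symm
    _ = 1 := by rw [← ENNReal.tsum_toReal_eq fun _ => ENNReal.ofReal_ne_top, hmass,
        ENNReal.toReal_one]

/-- If a tree with edge-weight probability distributions at each node has no infinite
directed paths, then the sum over all leaves of their weights equals exactly 1. -/
theorem sum_leaf_weights_eq_one_of_wellFounded {A : Type*} [Countable A]
    (T : Set (List A)) (w : List A → A → ℝ)
    (hroot : [] ∈ T)
    (hprefix : ∀ (v : List A) (a : A), v ++ [a] ∈ T → v ∈ T)
    (hnonneg : ∀ (v : List A) (a : A), 0 ≤ w v a)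
    (hzero : ∀ (v : List A) (a : A), v ++ [a] ∉ T → w v a = 0)
    (hsum : ∀ v ∈ T, (∃ a : A, v ++ [a] ∈ T) → ∑' a : A, w v a = 1)
    (hwf : ¬ ∃ b : ℕ → A, ∀ n : ℕ, prefixList b n ∈ T) :
    ∑' v : {v : List A // IsLeaf T v}, nodeWeight w v.1 = 1 :=
  sum_leaf_weights_eq_one_of_wellFounded_general T w hroot hnonneg hzero hsum hwf
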